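/- arXiv:math/0305111 — 4 statements merged into one kernel-verified Lean document; each statement's English description precedes it below -/
import Mathlib

section
/- If M is a finitely generated graded module over the graded polynomial ring K[x₁,…,xₙ] where xᵢ has degree dᵢ ≥ 1, then the Hilbert series of M can be written as A(t)/((1-t^{d₁})⋯(1-t^{dₙ})) where A(t) is a Laurent polynomial with integer coefficients. -/
/-!
Induction on the number of variables. Multiplication by `x₀`, of degree `e = d₀`, sits in an
exact sequence of graded vector spaces `0 → Z_{m-e} → M_{m-e} → M_m → Q_m → 0`, where `Z` is its
kernel and `Q = M / x₀M` its cokernel. Both are finitely generated graded modules killed by `x₀`,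
i.e. modules over `K[x₁,…,x_{n-1}]`, and counting dimensions gives
`(1 - t^e) H(M) = H(Q) - t^e H(Z)`, so the induction hypothesis for `Z` and `Q` gives the claim
for `M`. With no variables `M` is finite-dimensional and `H(M)` is itself a Laurent polynomial.
-/

open MvPolynomial LaurentPolynomial DirectSum Function

namespace LaurentPolynomial

/-- `convolve P H m` is the coefficient of `t^m` in `P(t) · ∑ⱼ H(j) tʲ`. -/
def convolve (P : LaurentPolynomial ℤ) (H : ℤ → ℤ) (m : ℤ) : ℤ :=
  P.coeff.sum fun k c => c * H (m - k)

theorem convolve_add (P Q : LaurentPolynomial ℤ) (H : ℤ → ℤ) :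
    convolve (P + Q) H = convolve P H + convolve Q H := by
  ext m
  simp only [convolve, AddMonoidAlgebra.coeff_add, Pi.add_apply]
  exact Finsupp.sum_add_index' (fun _ => zero_mul _) fun _ _ _ => add_mul _ _ _

theorem convolve_sub (P Q : LaurentPolynomial ℤ) (H : ℤ → ℤ) :
    convolve (P - Q) H = convolve P H - convolve Q H := by
  ext m
  simp only [convolve, AddMonoidAlgebra.coeff_sub, Pi.sub_apply]
  exact Finsupp.sum_sub_index fun _ _ _ => sub_mul _ _ _

theorem convolve_C_mul_T (c n : ℤ) (H : ℤ → ℤ) (m : ℤ) :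
    convolve (C c * T n) H m = c * H (m - n) := by
  rw [← single_eq_C_mul_T]
  exact Finsupp.sum_single_index (zero_mul _)

theorem convolve_one (H : ℤ → ℤ) : convolve 1 H = H := by
  ext m
  simpa using convolve_C_mul_T 1 0 H m

theorem convolve_T_mul (a : ℤ) (P : LaurentPolynomial ℤ) (H : ℤ → ℤ) (m : ℤ) :
    convolve (T a * P) H m = convolve P H (m - a) := by
  induction P using LaurentPolynomial.induction_on' with
  | add P Q hP hQ => simp only [mul_add, convolve_add, Pi.add_apply, hP, hQ]
  | C_mul_T n c =>
    rw [mul_left_comm, ← T_add, convolve_C_mul_T, convolve_C_mul_T, sub_sub, add_comm]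

theorem hasFiniteSupport_convolve_one_sub_T_mul {a : ℤ} {P : LaurentPolynomial ℤ}
    {H F G : ℤ → ℤ} (hH : ∀ j, H j - H (j - a) = G j - F (j - a))
    (hF : (convolve P F).HasFiniteSupport) (hG : (convolve P G).HasFiniteSupport) :
    (convolve ((1 - T a) * P) H).HasFiniteSupport := by
  have h : convolve ((1 - T a) * P) H = fun m => convolve P G m - convolve P F (m - a) := by
    ext m
    rw [sub_mul, one_mul, convolve_sub, Pi.sub_apply, convolve_T_mul]
    simp only [convolve, ← Finsupp.sum_sub, ← mul_sub, sub_right_comm _ a, hH]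
  rw [h]
  exact hG.sub (hF.fun_comp_of_injective sub_left_injective)

end LaurentPolynomial

noncomputable def hilbertFunction {ι K M : Type*} [Semiring K] [AddCommMonoid M] [Module K M]
    (ℳ : ι → Submodule K M) (i : ι) : ℤ :=
  Module.finrank K (ℳ i)

section FiniteDimensional

variable {K M N Q : Type*} [DivisionRing K] [AddCommGroup M] [Module K M]
  [AddCommGroup N] [Module K N] [AddCommGroup Q] [Module K Q]

theorem Submodule.finrank_map_add_finrank_inf_ker (g : M →ₗ[K] Q) (p : Submodule K M)
    [FiniteDimensional K p] :
    Module.finrank K (p.map g) + Module.finrank K ↥(p ⊓ LinearMap.ker g) = Module.finrank K p := by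
  have h := LinearMap.finrank_range_add_finrank_ker (g ∘ₗ p.subtype)
  rwa [LinearMap.range_comp, Submodule.range_subtype, LinearMap.ker_comp,
    ← Submodule.finrank_map_subtype_eq, Submodule.map_comap_subtype] at h

theorem Submodule.finrank_comap_of_injective {J : N →ₗ[K] M} (hJ : Injective J)
    (p : Submodule K M) :
    Module.finrank K (p.comap J) = Module.finrank K ↥(p ⊓ LinearMap.range J) := by
  rw [(Submodule.equivMapOfInjective J hJ _).finrank_eq, Submodule.map_comap_eq, inf_comm]

theorem Submodule.finiteDimensional_comap_of_injective {J : N →ₗ[K] M} (hJ : Injective J)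
    (p : Submodule K M) [FiniteDimensional K p] : FiniteDimensional K (p.comap J) :=
  have := Submodule.finiteDimensional_of_le (Submodule.map_comap_le J p)
  Module.Finite.equiv (Submodule.equivMapOfInjective J hJ _).symm

theorem hilbertFunction_hasFiniteSupport {ι : Type*} [DecidableEq ι] [FiniteDimensional K M]
    {ℳ : ι → Submodule K M} (hℳ : IsInternal ℳ) : (hilbertFunction ℳ).HasFiniteSupport :=
  (Submodule.finite_ne_bot_of_iSupIndep hℳ.submodule_iSupIndep).subset fun i hi hbot =>
    hi (by rw [hilbertFunction, hbot, finrank_bot, Nat.cast_zero])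

end FiniteDimensional

namespace DirectSum

section Homogeneous

variable {ι K M N Q : Type*} [DecidableEq ι] [Ring K]
  [AddCommGroup M] [Module K M] [AddCommGroup N] [Module K N] [AddCommGroup Q] [Module K Q]
  {ℳ : ι → Submodule K M} [Decomposition ℳ]

theorem le_iSup_inf_of_isHomogeneous {p : Submodule K M} (hp : SetLike.IsHomogeneous ℳ p) :
    p ≤ ⨆ i, ℳ i ⊓ p := by
  classical
  intro x hx
  rw [← sum_support_decompose ℳ x]
  exact Submodule.sum_mem _ fun i _ => Submodule.mem_iSup_of_mem i ⟨SetLike.coe_mem _, hp i hx⟩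

theorem isInternal_comap_of_injective {J : N →ₗ[K] M} (hJ : Injective J)
    (hrange : SetLike.IsHomogeneous ℳ (LinearMap.range J)) :
    IsInternal fun i => (ℳ i).comap J := by
  have hmap : ∀ i, ((ℳ i).comap J).map J = ℳ i ⊓ LinearMap.range J := fun i => by
    rw [Submodule.map_comap_eq, inf_comm]
  refine (isInternal_submodule_iff_iSupIndep_and_iSup_eq_top _).mpr ⟨fun i => ?_, ?_⟩
  · have h := ((Decomposition.isInternal ℳ).submodule_iSupIndep.mono
      fun j => (hmap j).trans_le inf_le_left) i
    simp only [← Submodule.map_iSup] at h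
    rw [disjoint_iff, ← Submodule.map_inf J hJ, ← Submodule.map_bot J] at h
    exact disjoint_iff.mpr (Submodule.map_injective_of_injective hJ h)
  · refine Submodule.map_injective_of_injective hJ ?_
    rw [Submodule.map_iSup, Submodule.map_top]
    simp only [hmap]
    exact le_antisymm (iSup_le fun i => inf_le_right) (le_iSup_inf_of_isHomogeneous hrange)

theorem isInternal_map_of_surjective {π : M →ₗ[K] Q} (hπ : Surjective π)
    (hker : SetLike.IsHomogeneous ℳ (LinearMap.ker π)) :
    IsInternal fun i => (ℳ i).map π := by
  refine (isInternal_submodule_iff_iSupIndep_and_iSup_eq_top _).mpr ⟨fun i => ?_, ?_⟩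
  · let proj : M →ₗ[K] M := (ℳ i).subtype ∘ₗ component K ι (fun i => ℳ i) i ∘ₗ
      (decomposeLinearEquiv ℳ).toLinearMap
    have hproj : ∀ x, proj x = decompose ℳ x i := fun x => rfl
    have hothers : ⨆ j, ⨆ (_ : j ≠ i), ℳ j ≤ LinearMap.ker proj :=
      iSup₂_le fun j hj x hx => by rw [LinearMap.mem_ker, hproj, decompose_of_mem_ne ℳ hx hj]
    simp only [← Submodule.map_iSup]
    rw [Submodule.disjoint_def]
    rintro _ ⟨a, ha, rfl⟩ ⟨b, hb, hab⟩
    have hdiff : b - a ∈ LinearMap.ker π := by rw [LinearMap.mem_ker, map_sub, hab, sub_self]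
    have h := hker i hdiff
    rw [decompose_sub, sub_apply, Submodule.coe_sub, ← hproj, LinearMap.mem_ker.mp (hothers hb),
      decompose_of_mem_same ℳ ha, zero_sub, neg_mem_iff] at h
    exact h
  · rw [← Submodule.map_iSup, (Decomposition.isInternal ℳ).submodule_iSup_eq_top,
      Submodule.map_top, LinearMap.range_eq_top.mpr hπ]

variable [AddCommGroup ι] {f : M →ₗ[K] M} {e : ι}

theorem decompose_map_add_of_mapsTo (hf : ∀ i, ∀ x ∈ ℳ i, f x ∈ ℳ (i + e)) (x : M) (i : ι) :
    (decompose ℳ (f x) (i + e) : M) = f (decompose ℳ x i) := by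
  induction x using Decomposition.inductionOn ℳ with
  | zero => simp
  | @homogeneous j x =>
    by_cases hij : j = i
    · subst hij
      rw [decompose_of_mem_same ℳ (hf j x x.2), decompose_of_mem_same ℳ x.2]
    · rw [decompose_of_mem_ne ℳ (hf j x x.2) (by simpa using hij),
        decompose_of_mem_ne ℳ x.2 hij, map_zero]
  | add x y hx hy => simp only [map_add, decompose_add, add_apply, Submodule.coe_add, hx, hy]

theorem isHomogeneous_ker_of_mapsTo (hf : ∀ i, ∀ x ∈ ℳ i, f x ∈ ℳ (i + e)) :
    SetLike.IsHomogeneous ℳ (LinearMap.ker f) := by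
  intro i x hx
  rw [LinearMap.mem_ker] at hx ⊢
  rw [← decompose_map_add_of_mapsTo hf, hx, decompose_zero, zero_apply, Submodule.coe_zero]

theorem isHomogeneous_range_of_mapsTo (hf : ∀ i, ∀ x ∈ ℳ i, f x ∈ ℳ (i + e)) :
    SetLike.IsHomogeneous ℳ (LinearMap.range f) := by
  rintro i _ ⟨x, rfl⟩
  rw [← sub_add_cancel i e, decompose_map_add_of_mapsTo hf]
  exact LinearMap.mem_range_self f _

theorem map_eq_inf_range_of_mapsTo (hf : ∀ i, ∀ x ∈ ℳ i, f x ∈ ℳ (i + e)) (i : ι) :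
    (ℳ i).map f = ℳ (i + e) ⊓ LinearMap.range f := by
  refine le_antisymm (Submodule.map_le_iff_le_comap.mpr fun x hx => ⟨hf i x hx, x, rfl⟩) ?_
  rintro _ ⟨hx, x, rfl⟩
  rw [← decompose_of_mem_same ℳ hx, decompose_map_add_of_mapsTo hf]
  exact Submodule.mem_map_of_mem (SetLike.coe_mem _)

theorem isInternal_comap_of_exact (hf : ∀ i, ∀ x ∈ ℳ i, f x ∈ ℳ (i + e)) {J : N →ₗ[K] M}
    (hJ : Injective J) (hJf : Exact J f) : IsInternal fun i => (ℳ i).comap J :=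
  isInternal_comap_of_injective hJ (hJf.linearMap_ker_eq ▸ isHomogeneous_ker_of_mapsTo hf)

theorem isInternal_map_of_exact (hf : ∀ i, ∀ x ∈ ℳ i, f x ∈ ℳ (i + e)) {π : M →ₗ[K] Q}
    (hπ : Surjective π) (hfπ : Exact f π) : IsInternal fun i => (ℳ i).map π :=
  isInternal_map_of_surjective hπ (hfπ.linearMap_ker_eq ▸ isHomogeneous_range_of_mapsTo hf)

end Homogeneous

end DirectSum

theorem hilbertFunction_add_sub_of_exact {ι K M N Q : Type*} [DecidableEq ι] [AddCommGroup ι]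
    [DivisionRing K] [AddCommGroup M] [Module K M] [AddCommGroup N] [Module K N]
    [AddCommGroup Q] [Module K Q] {ℳ : ι → Submodule K M} [Decomposition ℳ]
    [∀ i, FiniteDimensional K (ℳ i)] {f : M →ₗ[K] M} {e : ι}
    (hf : ∀ i, ∀ x ∈ ℳ i, f x ∈ ℳ (i + e)) {J : N →ₗ[K] M} (hJ : Injective J)
    (hJf : Exact J f) {π : M →ₗ[K] Q} (hfπ : Exact f π) (i : ι) :
    hilbertFunction ℳ (i + e) - hilbertFunction ℳ i =
      hilbertFunction (fun j => (ℳ j).map π) (i + e) -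
        hilbertFunction (fun j => (ℳ j).comap J) i := by
  have hπ := Submodule.finrank_map_add_finrank_inf_ker π (ℳ (i + e))
  have hf' := Submodule.finrank_map_add_finrank_inf_ker f (ℳ i)
  rw [hfπ.linearMap_ker_eq, ← map_eq_inf_range_of_mapsTo hf] at hπ
  rw [hJf.linearMap_ker_eq, ← Submodule.finrank_comap_of_injective hJ] at hf'
  simp only [hilbertFunction]
  omega

theorem MvPolynomial.IsWeightedHomogeneous.rename {K σ τ : Type*} [CommSemiring K]
    {w : τ → ℕ} {p : MvPolynomial σ K} {e : ℕ} (g : σ → τ)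
    (hp : p.IsWeightedHomogeneous (w ∘ g) e) : (rename g p).IsWeightedHomogeneous w e := by
  intro δ hδ
  obtain ⟨u, rfl, hu⟩ := coeff_rename_ne_zero g p δ hδ
  rw [← hp hu, Finsupp.weight_apply, Finsupp.weight_apply]
  exact Finsupp.sum_mapDomain_index (fun _ => zero_smul _ _) fun _ _ _ => add_smul _ _ _

def IsWeightedGrading {σ K M : Type*} [CommSemiring K] [AddCommMonoid M] [Module K M]
    [Module (MvPolynomial σ K) M] (d : σ → ℕ) (ℳ : ℤ → Submodule K M) : Prop :=
  ∀ (e : ℕ) (p : MvPolynomial σ K), p ∈ weightedHomogeneousSubmodule K d e →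
    ∀ (m : ℤ) (x : M), x ∈ ℳ m → p • x ∈ ℳ (m + e)

theorem IsWeightedGrading.comp {σ τ K M : Type*} [CommSemiring K] [AddCommMonoid M] [Module K M]
    [Module (MvPolynomial σ K) M] [Module (MvPolynomial τ K) M] {d : τ → ℕ}
    {ℳ : ℤ → Submodule K M} (h : IsWeightedGrading d ℳ) (g : σ → τ)
    (hsmul : ∀ (p : MvPolynomial σ K) (x : M), p • x = rename g p • x) :
    IsWeightedGrading (d ∘ g) ℳ := fun e p hp m x hx =>
  hsmul p x ▸ h e _ (IsWeightedHomogeneous.rename g hp) m x hx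

section FinSucc

variable {K N : Type*} [CommSemiring K] [AddCommMonoid N] {n : ℕ}
  [Module (MvPolynomial (Fin (n + 1)) K) N]

theorem smul_eq_rename_aeval_smul_of_X_zero_smul
    (hX : ∀ v : N, (X 0 : MvPolynomial (Fin (n + 1)) K) • v = 0)
    (p : MvPolynomial (Fin (n + 1)) K) (v : N) :
    p • v = rename Fin.succ (aeval (Fin.cases 0 X : _ → MvPolynomial (Fin n) K) p) • v := by
  induction p using MvPolynomial.induction_on generalizing v with
  | C a => rw [aeval_C, MvPolynomial.algebraMap_eq, rename_C]
  | add p q hp hq => rw [add_smul, hp, hq, map_add, map_add, add_smul]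
  | mul_X p i hp =>
    rw [map_mul, aeval_X, map_mul, mul_smul, mul_smul]
    cases i using Fin.cases with
    | zero => rw [hX, Fin.cases_zero, map_zero, zero_smul, smul_zero, smul_zero]
    | succ j => rw [hp, Fin.cases_succ, rename_X]

theorem Module.Finite.of_X_zero_smul [Module (MvPolynomial (Fin n) K) N]
    (hsmul : ∀ (p : MvPolynomial (Fin n) K) (v : N), p • v = rename Fin.succ p • v)
    (hX : ∀ v : N, (X 0 : MvPolynomial (Fin (n + 1)) K) • v = 0)
    [hN : Module.Finite (MvPolynomial (Fin (n + 1)) K) N] :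
    Module.Finite (MvPolynomial (Fin n) K) N := by
  obtain ⟨S, hS⟩ := hN.fg_top
  let span' : Submodule (MvPolynomial (Fin (n + 1)) K) N :=
    { Submodule.span (MvPolynomial (Fin n) K) (S : Set N) with
      smul_mem' := fun p v hv => by
        rw [smul_eq_rename_aeval_smul_of_X_zero_smul hX, ← hsmul]
        exact Submodule.smul_mem _ _ hv }
  refine ⟨⟨S, eq_top_iff.mpr fun v _ => ?_⟩⟩
  have hle : (⊤ : Submodule _ N) ≤ span' := hS ▸ Submodule.span_le.mpr Submodule.subset_span
  exact hle trivial

end FinSucc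

section Quotients

variable {σ K M : Type*} [CommRing K] [AddCommGroup M] [Module K M]
  [Module (MvPolynomial σ K) M] [IsScalarTower K (MvPolynomial σ K) M]
  {d : σ → ℕ} {ℳ : ℤ → Submodule K M}

theorem IsWeightedGrading.comap_subtype (h : IsWeightedGrading d ℳ)
    (N : Submodule (MvPolynomial σ K) M) :
    IsWeightedGrading d fun m => (ℳ m).comap (N.subtype.restrictScalars K) :=
  fun e p hp m x hx => h e p hp m x hx

theorem IsWeightedGrading.map_mkQ (h : IsWeightedGrading d ℳ)
    (N : Submodule (MvPolynomial σ K) M) :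
    IsWeightedGrading d fun m => (ℳ m).map (N.mkQ.restrictScalars K) := by
  rintro e p hp m _ ⟨x, hx, rfl⟩
  exact ⟨p • x, h e p hp m x hx, rfl⟩

end Quotients

universe u

def HilbertSerre (K : Type*) [Field K] (n : ℕ) : Prop :=
  ∀ (d : Fin n → ℕ) (M : Type u) [AddCommGroup M] [Module K M]
    [Module (MvPolynomial (Fin n) K) M] [IsScalarTower K (MvPolynomial (Fin n) K) M]
    (ℳ : ℤ → Submodule K M), IsInternal ℳ → IsWeightedGrading d ℳ →
    (∀ m, FiniteDimensional K (ℳ m)) → Module.Finite (MvPolynomial (Fin n) K) M →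
    (convolve (∏ i, (1 - T (d i : ℤ))) (hilbertFunction ℳ)).HasFiniteSupport

namespace HilbertSerre

variable {K : Type*} [Field K]

theorem zero : HilbertSerre.{u} K 0 := by
  intro d M _ _ _ _ ℳ hℳ _ _ _
  have : Module.Finite K (MvPolynomial (Fin 0) K) :=
    Module.Finite.equiv (isEmptyAlgEquiv K (Fin 0)).symm.toLinearEquiv
  have : Module.Finite K M := Module.Finite.trans (MvPolynomial (Fin 0) K) M
  rw [Finset.univ_eq_empty, Finset.prod_empty, convolve_one]
  exact hilbertFunction_hasFiniteSupport hℳ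

theorem hasFiniteSupport_of_X_zero_smul {n : ℕ} (ih : HilbertSerre.{u} K n)
    {d : Fin (n + 1) → ℕ} {N : Type u} [AddCommGroup N] [Module K N]
    [Module (MvPolynomial (Fin (n + 1)) K) N] [IsScalarTower K (MvPolynomial (Fin (n + 1)) K) N]
    {𝒩 : ℤ → Submodule K N} (h𝒩 : IsInternal 𝒩) (hgr : IsWeightedGrading d 𝒩)
    (hfin : ∀ m, FiniteDimensional K (𝒩 m)) [Module.Finite (MvPolynomial (Fin (n + 1)) K) N]
    (hX : ∀ v : N, (X 0 : MvPolynomial (Fin (n + 1)) K) • v = 0) :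
    (convolve (∏ i : Fin n, (1 - T (d i.succ : ℤ))) (hilbertFunction 𝒩)).HasFiniteSupport := by
  let : Module (MvPolynomial (Fin n) K) N := Module.compHom N (rename Fin.succ).toRingHom
  have hsmul : ∀ (p : MvPolynomial (Fin n) K) (v : N), p • v = rename Fin.succ p • v :=
    fun _ _ => rfl
  have : IsScalarTower K (MvPolynomial (Fin n) K) N :=
    ⟨fun k p v => by rw [hsmul, hsmul, map_smul, smul_assoc]⟩
  exact ih (d ∘ Fin.succ) N 𝒩 h𝒩 (hgr.comp Fin.succ hsmul) hfin (.of_X_zero_smul hsmul hX)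

theorem succ {n : ℕ} (ih : HilbertSerre.{u} K n) : HilbertSerre.{u} K (n + 1) := by
  intro d M _ _ _ _ ℳ hℳ hgr hfin _
  let _ := hℳ.chooseDecomposition
  let ℓ := LinearMap.lsmul (MvPolynomial (Fin (n + 1)) K) M (X 0)
  let J := (LinearMap.ker ℓ).subtype.restrictScalars K
  let π := (LinearMap.range ℓ).mkQ.restrictScalars K
  have hℓ : ∀ m, ∀ x ∈ ℳ m, ℓ.restrictScalars K x ∈ ℳ (m + d 0) := fun m x hx =>
    hgr _ _ (isWeightedHomogeneous_X K d 0) m x hx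
  have hJ : Injective J := (LinearMap.ker ℓ).injective_subtype
  have hπ : Surjective π := (LinearMap.range ℓ).mkQ_surjective
  have hJℓ : Exact J (ℓ.restrictScalars K) := LinearMap.exact_subtype_ker_map ℓ
  have hℓπ : Exact (ℓ.restrictScalars K) π := LinearMap.exact_map_mkQ_range ℓ
  have hZ := ih.hasFiniteSupport_of_X_zero_smul (isInternal_comap_of_exact hℓ hJ hJℓ)
    (hgr.comap_subtype _) (fun m => Submodule.finiteDimensional_comap_of_injective hJ _)
    fun z => Subtype.ext (LinearMap.mem_ker.mp z.2)
  have hQ := ih.hasFiniteSupport_of_X_zero_smul (isInternal_map_of_exact hℓ hπ hℓπ)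
    (hgr.map_mkQ _) (fun _ => inferInstance)
    fun v => Submodule.Quotient.induction_on _ v fun x =>
      (Submodule.Quotient.mk_eq_zero _).mpr (LinearMap.mem_range_self ℓ x)
  rw [Fin.prod_univ_succ]
  refine hasFiniteSupport_convolve_one_sub_T_mul (fun m => ?_) hZ hQ
  simpa using hilbertFunction_add_sub_of_exact hℓ hJ hJℓ hℓπ (m - d 0)

end HilbertSerre

theorem hilbertSerre (K : Type*) [Field K] (n : ℕ) : HilbertSerre.{u} K n := by
  induction n with
  | zero => exact .zero
  | succ n ih => exact ih.succ

theorem hilbert_series_fg_module_over_weighted_polynomial_ring_general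
    (K : Type) [Field K] (n : ℕ) (d : Fin n → ℕ)
    (M : Type) [AddCommGroup M] [Module K M]
    [Module (MvPolynomial (Fin n) K) M]
    [IsScalarTower K (MvPolynomial (Fin n) K) M]
    (ℳ : ℤ → Submodule K M)
    (hdecomp : DirectSum.IsInternal ℳ)
    (hgraded : ∀ (e : ℕ) (p : MvPolynomial (Fin n) K),
      p ∈ weightedHomogeneousSubmodule K d e →
      ∀ (m : ℤ) (x : M), x ∈ ℳ m → p • x ∈ ℳ (m + e))
    (hfin : ∀ m : ℤ, FiniteDimensional K (ℳ m))
    (hMfg : Module.Finite (MvPolynomial (Fin n) K) M)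
    (H : ℤ → ℤ) (hH : ∀ m, H m = Module.finrank K (ℳ m))
    (P : LaurentPolynomial ℤ) (hP : P = ∏ i, (1 - LaurentPolynomial.T (d i))) :
    ∃ A : LaurentPolynomial ℤ, ∀ m : ℤ, (P.coeff.sum fun k c => c * H (m - k)) = A.coeff m := by
  obtain rfl : H = hilbertFunction ℳ := funext hH
  subst hP
  have h := hilbertSerre K n d M ℳ hdecomp hgraded hfin hMfg
  exact ⟨AddMonoidAlgebra.ofCoeff (Finsupp.ofSupportFinite _ h), fun _ => rfl⟩

/-- If `M` is a finitely generated graded module over the weighted polynomial ring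
`K[x₁,…,xₙ]` with `deg xᵢ = dᵢ ≥ 1`, then the Hilbert series of `M` is
`A(t)/((1-t^{d₁})⋯(1-t^{dₙ}))` for a Laurent polynomial `A ∈ ℤ[t,t⁻¹]`; equivalently,
`(∏ᵢ(1-t^{dᵢ}))·H(M,t)` is a Laurent polynomial `A` (stated coefficientwise). -/
theorem hilbert_series_fg_module_over_weighted_polynomial_ring
    (K : Type) [Field K] (n : ℕ) (d : Fin n → ℕ) (hd : ∀ i, 1 ≤ d i)
    (M : Type) [AddCommGroup M] [Module K M]
    [Module (MvPolynomial (Fin n) K) M]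
    [IsScalarTower K (MvPolynomial (Fin n) K) M]
    (ℳ : ℤ → Submodule K M)
    (hdecomp : DirectSum.IsInternal ℳ)
    (hgraded : ∀ (e : ℕ) (p : MvPolynomial (Fin n) K),
      p ∈ weightedHomogeneousSubmodule K d e →
      ∀ (m : ℤ) (x : M), x ∈ ℳ m → p • x ∈ ℳ (m + e))
    (hfin : ∀ m : ℤ, FiniteDimensional K (ℳ m))
    (hMfg : Module.Finite (MvPolynomial (Fin n) K) M)
    (H : ℤ → ℤ) (hH : ∀ m, H m = Module.finrank K (ℳ m))
    (P : LaurentPolynomial ℤ) (hP : P = ∏ i, (1 - LaurentPolynomial.T (d i))) :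
    ∃ A : LaurentPolynomial ℤ, ∀ m : ℤ, (P.coeff.sum fun k c => c * H (m - k)) = A.coeff m :=
  hilbert_series_fg_module_over_weighted_polynomial_ring_general K n d M ℳ hdecomp hgraded hfin hMfg
    H hH P hP
end

section
/- Let X be an affine variety over an algebraically closed field K with an action of a torus T = (K*)^r, corresponding to a ℕ^r-grading of its coordinate ring R. Fix d = (d₁,…,d_r) ∈ ℕ^r with some dᵢ not divisible by char K. Let I^{[d]} ⊆ R be the ideal generated by all homogeneous elements whose degree e is not an integer multiple of d, and let T^{[d]} = ker(t ↦ t^d). Then the zero set of I^{[d]} equals the fixed-point set X^{T^{[d]}}. -/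
/-!
A point `x` lies in the zero set of `I^{[d]}` iff `x f = 0` for every homogeneous `f` of degree
`e ∉ ℕ d`, while it is `T^{[d]}`-fixed iff `t ^ e = 1` on `T^{[d]}` for every degree `e` with
some `x f ≠ 0`, `f ∈ R_e`. So everything reduces to a statement about characters of the torus:
`ker (t ↦ t ^ d) ≤ ker (t ↦ t ^ e)` iff `e ∈ ℕ d`. For the hard direction, a primitive
`dᵢ`-th root of unity in slot `i` (it exists as `dᵢ ≠ 0` in `K`) gives `dᵢ ∣ eᵢ`, and the
elements `s ^ dᵢ` in slot `j`, `s ^ (-dⱼ)` in slot `i` give `s ^ (dᵢ eⱼ - dⱼ eᵢ) = 1` for all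
`s ∈ K*`, whence `dᵢ eⱼ = dⱼ eᵢ` because `K*` has exponent zero.
-/

open Finset

variable {ι : Type*} [Fintype ι]

def torusCharacter (M : Type*) [CommMonoid M] (m : ι → ℕ) : (ι → M) →* M where
  toFun t := ∏ i, t i ^ m i
  map_one' := by simp
  map_mul' s t := by simp only [Pi.mul_apply, mul_pow, prod_mul_distrib]

section CommMonoid

variable {M : Type*} [CommMonoid M] (m : ι → ℕ)

@[simp]
theorem torusCharacter_apply (t : ι → M) : torusCharacter M m t = ∏ i, t i ^ m i := rfl

theorem torusCharacter_mulSingle [DecidableEq ι] (j : ι) (c : M) :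
    torusCharacter M m (Pi.mulSingle j c) = c ^ m j := by
  rw [torusCharacter_apply, Fintype.prod_eq_single j fun i hi => by simp [hi]]
  simp

theorem torusCharacter_nsmul (k : ℕ) (t : ι → M) :
    torusCharacter M (k • m) t = torusCharacter M m t ^ k := by
  simp only [torusCharacter_apply, Pi.smul_apply, smul_eq_mul, pow_mul', prod_pow]

theorem Units.val_torusCharacter (t : ι → Mˣ) :
    (torusCharacter Mˣ m t : M) = ∏ i, (t i : M) ^ m i := by
  simp

end CommMonoid

theorem exponent_units_eq_zero_of_infinite (K : Type*) [Field K] [Infinite K] :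
    Monoid.exponent Kˣ = 0 := by
  rw [Monoid.exponent_eq_zero_iff]
  rintro ⟨n, hn, hpow⟩
  have : NeZero n := ⟨hn.ne'⟩
  have : Finite Kˣ := .of_injective (fun s : Kˣ => (⟨s, (mem_rootsOfUnity n s).2 (hpow s)⟩ :
    rootsOfUnity n K)) fun s s' h => congrArg Subtype.val h
  have := Nat.card_units K
  rw [Nat.card_eq_zero_of_infinite (α := K)] at this
  exact Nat.card_pos.ne' this

theorem eq_of_forall_pow_eq_pow {G : Type*} [Group G] (hG : Monoid.exponent G = 0) {a b : ℕ}
    (h : ∀ g : G, g ^ a = g ^ b) : a = b := by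
  wlog hab : a ≤ b generalizing a b
  · exact (this (fun g => (h g).symm) (le_of_not_ge hab)).symm
  by_contra hne
  refine Monoid.exponent_eq_zero_iff.1 hG ⟨b - a, by omega, fun g => ?_⟩
  rw [pow_sub g hab, h, mul_inv_cancel]

section CommGroup

variable {G : Type*} [CommGroup G] {d e : ι → ℕ}

theorem ker_torusCharacter_le_of_eq_nsmul {k : ℕ} (he : e = k • d) :
    (torusCharacter G d).ker ≤ (torusCharacter G e).ker := by
  intro t ht
  rw [MonoidHom.mem_ker] at ht ⊢
  rw [he, torusCharacter_nsmul, ht, one_pow]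

variable [DecidableEq ι]

theorem dvd_of_ker_torusCharacter_le {ζ : G} {i : ι} (hζ : IsPrimitiveRoot ζ (d i))
    (h : (torusCharacter G d).ker ≤ (torusCharacter G e).ker) : d i ∣ e i := by
  have hker : Pi.mulSingle i ζ ∈ (torusCharacter G d).ker := by
    rw [MonoidHom.mem_ker, torusCharacter_mulSingle, hζ.pow_eq_one]
  have := h hker
  rw [MonoidHom.mem_ker, torusCharacter_mulSingle] at this
  exact hζ.dvd_of_pow_eq_one _ this

theorem mul_eq_mul_of_ker_torusCharacter_le (hG : Monoid.exponent G = 0)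
    (h : (torusCharacter G d).ker ≤ (torusCharacter G e).ker) (i j : ι) :
    d i * e j = d j * e i := by
  set t : G → ι → G := fun s => Pi.mulSingle j (s ^ d i) * (Pi.mulSingle i (s ^ d j))⁻¹
  have ht (m : ι → ℕ) (s : G) :
      torusCharacter G m (t s) = s ^ (d i * m j) * (s ^ (d j * m i))⁻¹ := by
    simp only [t, map_mul, map_inv, torusCharacter_mulSingle, pow_mul]
  refine eq_of_forall_pow_eq_pow hG fun s => ?_
  have hker : t s ∈ (torusCharacter G d).ker := by
    rw [MonoidHom.mem_ker, ht, mul_comm (d j), mul_inv_cancel]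
  have := h hker
  rwa [MonoidHom.mem_ker, ht, mul_inv_eq_one] at this

theorem ker_torusCharacter_le_iff (hG : Monoid.exponent G = 0) {ζ : G} {i : ι}
    (hζ : IsPrimitiveRoot ζ (d i)) (hdi : d i ≠ 0) :
    (torusCharacter G d).ker ≤ (torusCharacter G e).ker ↔ ∃ k : ℕ, e = k • d := by
  refine ⟨fun h => ?_, fun ⟨k, he⟩ => ker_torusCharacter_le_of_eq_nsmul he⟩
  obtain ⟨k, hk⟩ := dvd_of_ker_torusCharacter_le hζ h
  refine ⟨k, funext fun j => ?_⟩
  have := mul_eq_mul_of_ker_torusCharacter_le hG h i j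
  rw [hk] at this
  rw [Pi.smul_apply, smul_eq_mul]
  exact Nat.eq_of_mul_eq_mul_left (Nat.pos_of_ne_zero hdi) (by rw [this]; ring)

end CommGroup

theorem zero_set_eq_torus_fixed_points_general
    (K : Type) [Field K] [IsAlgClosed K]
    (r : ℕ) (R : Type) [CommRing R] [Algebra K R]
    (𝒜 : (Fin r → ℕ) → Submodule K R)
    (d : Fin r → ℕ) (hchar : ∃ i, ¬ ((ringChar K : ℕ) ∣ d i))
    (Id : Ideal R)
    (hId : Id = Ideal.span {f : R | ∃ e : Fin r → ℕ,
      f ∈ 𝒜 e ∧ ¬ ∃ k : ℕ, e = k • d})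
    (x : R →ₐ[K] K) :
    (∀ f ∈ Id, x f = 0) ↔
      (∀ t : Fin r → Kˣ, (∏ i, ((t i : K)) ^ (d i)) = 1 →
        ∀ (e : Fin r → ℕ) (f : R), f ∈ 𝒜 e →
          (∏ i, ((t i : K)) ^ (e i)) * x f = x f) := by
  obtain ⟨i, hi⟩ := hchar
  have : NeZero (d i : K) := ⟨fun h => hi ((ringChar.spec K _).1 h)⟩
  have hdi : d i ≠ 0 := (NeZero.of_neZero_natCast K).ne
  obtain ⟨ζ, hζ⟩ := HasEnoughRootsOfUnity.exists_primitiveRoot K (d i)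
  obtain ⟨ζ, rfl⟩ := hζ.isUnit hdi
  have hker : ∀ e, (torusCharacter Kˣ d).ker ≤ (torusCharacter Kˣ e).ker ↔ ∃ k : ℕ, e = k • d :=
    fun e => ker_torusCharacter_le_iff (exponent_units_eq_zero_of_infinite K)
      (IsPrimitiveRoot.coe_units_iff.1 hζ) hdi
  simp only [← Units.val_torusCharacter, Units.val_eq_one, ← MonoidHom.mem_ker]
  subst hId
  constructor
  · intro hx t ht e f hf
    by_cases he : ∃ k : ℕ, e = k • d
    · rw [MonoidHom.mem_ker.1 ((hker e).2 he ht), Units.val_one, one_mul]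
    · rw [hx f (Ideal.subset_span ⟨e, hf, he⟩), mul_zero]
  · intro hfix f hf
    refine (Ideal.span_le (I := RingHom.ker x)).2 ?_ hf
    rintro f ⟨e, hfe, he⟩
    by_contra hxf
    refine he ((hker e).1 fun t ht => ?_)
    rw [MonoidHom.mem_ker, ← Units.val_eq_one]
    exact (mul_eq_right₀ hxf).1 (hfix t ht e f hfe)

/-- Let `R` be a finitely generated `ℕ^r`-graded algebra over an algebraically closed
field `K`, corresponding to an affine variety `X` with an action of the torus
`T = (K*)^r` (so `t · f = t^e f` for `f` homogeneous of degree `e`). Fix `d ∈ ℕ^r`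
with some `dᵢ` not divisible by `char K`. Let `I^{[d]}` be the ideal generated by all
homogeneous elements whose degree is not an integer multiple of `d`, and let
`T^{[d]} = ker(t ↦ t^d)`. Then a point `x` of `X` (a `K`-algebra homomorphism
`R → K`) lies in the zero set of `I^{[d]}` if and only if it is fixed by `T^{[d]}`. -/
theorem zero_set_eq_torus_fixed_points
    (K : Type) [Field K] [IsAlgClosed K]
    (r : ℕ) (R : Type) [CommRing R] [Algebra K R]
    (𝒜 : (Fin r → ℕ) → Submodule K R) [GradedAlgebra 𝒜]
    (hRfg : Algebra.FiniteType K R)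
    (d : Fin r → ℕ) (hchar : ∃ i, ¬ ((ringChar K : ℕ) ∣ d i))
    (Id : Ideal R)
    (hId : Id = Ideal.span {f : R | ∃ e : Fin r → ℕ,
      f ∈ 𝒜 e ∧ ¬ ∃ k : ℕ, e = k • d})
    (x : R →ₐ[K] K) :
    (∀ f ∈ Id, x f = 0) ↔
      (∀ t : Fin r → Kˣ, (∏ i, ((t i : K)) ^ (d i)) = 1 →
        ∀ (e : Fin r → ℕ) (f : R), f ∈ 𝒜 e →
          (∏ i, ((t i : K)) ^ (e i)) * x f = x f) :=
  zero_set_eq_torus_fixed_points_general K r R 𝒜 d hchar Id hId x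
end

section
/- Molien's formula: if a finite group G acts linearly on a finite-dimensional vector space V over a field K of characteristic 0, and S = K[V] is the symmetric algebra graded by degree, then H(S^G, t) = (1/|G|) Σ_{g∈G} 1/det(id_V − t·g), as an identity of formal power series in t. -/
/-!
A linear substitution `M` acts on each homogeneous component `S_d` of `K[x₁, …, xₙ]`, and by
averaging over `G` (a projection onto the invariants, since `|G|` is invertible) the dimension of
`(S^G)_d` is `|G|⁻¹ Σ_g tr(g | S_d)`. It remains to see that `Σ_d tr(M | S_d) t^d` is the inverse
of `det(1 - t M)` whenever `M ^ N = 1` with `N` invertible. Both sides are compatible with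
extending scalars to an algebraic closure, where such an `M` is diagonalizable, and both are
invariant under conjugation. For `M = diag(δ)` the monomial `x^s` is an eigenvector with
eigenvalue `∏ δᵢ^{sᵢ}`, so the series is `∏ᵢ 1 / (1 - δᵢ t)`, which is `1 / det(1 - t M)`.
-/

lemma PowerSeries.one_sub_C_mul_X_mul_mk_pow {R : Type*} [CommRing R] (a : R) :
    (1 - C a * X) * mk (a ^ ·) = 1 := by
  simpa [rescale_mk, mul_comm] using congrArg (rescale a) (mk_one_mul_one_sub_eq_one R)

lemma Module.End.isSemisimple_of_pow_eq_one {K V : Type*} [Field K] [AddCommGroup V]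
    [Module K V] {f : Module.End K V} {N : ℕ} (hN : (N : K) ≠ 0) (hf : f ^ N = 1) :
    f.IsSemisimple :=
  isSemisimple_of_squarefree_aeval_eq_zero
    (Polynomial.X_pow_sub_one_separable_iff.mpr hN).squarefree (by simp [hf])

namespace Matrix

section CommRing

variable {n R : Type*} [Fintype n] [DecidableEq n] [CommRing R]

lemma charpolyRev_map {S : Type*} [CommRing S] (M : Matrix n n R) (f : R →+* S) :
    (M.map f).charpolyRev = M.charpolyRev.map f := by
  rw [charpolyRev, charpolyRev, ← Polynomial.coe_mapRingHom, RingHom.map_det,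
    RingHom.mapMatrix_apply]
  congr 1
  ext i j
  by_cases h : i = j <;> simp [h]

lemma charpolyRev_units_conj (P : (Matrix n n R)ˣ) (N : Matrix n n R) :
    (P.val * N * P⁻¹.val).charpolyRev = N.charpolyRev := by
  rw [← reverse_charpoly, ← reverse_charpoly, coe_units_inv, charpoly_units_conj]

lemma charpolyRev_diagonal (δ : n → R) :
    (diagonal δ).charpolyRev = ∏ i, (1 - Polynomial.X * Polynomial.C (δ i)) := by
  rw [charpolyRev, diagonal_map (map_zero _), ← diagonal_smul, ← diagonal_one, diagonal_sub,
    det_diagonal]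
  rfl

end CommRing

section Field

variable {n F : Type*} [Fintype n] [DecidableEq n] [Field F] [IsAlgClosed F]

lemma exists_units_conj_diagonal {M : Matrix n n F}
    (hM : Module.End.IsSemisimple (toLinAlgEquiv' M)) :
    ∃ (P : (Matrix n n F)ˣ) (δ : n → F), M = P.val * diagonal δ * P⁻¹.val := by
  classical
  set f : Module.End F (n → F) := toLinAlgEquiv' M
  have hint : DirectSum.IsInternal f.eigenspace :=
    DirectSum.isInternal_submodule_of_iSupIndep_of_iSup_eq_top f.eigenspaces_iSupIndep
      hM.iSup_eigenspace_eq_top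
  let b₀ := hint.collectedBasis fun μ => Module.Free.chooseBasis F (f.eigenspace μ)
  let e := b₀.indexEquiv (Pi.basisFun F n)
  let b := b₀.reindex e
  let δ : n → F := fun i => (e.symm i).1
  have hb (i : n) : f (b i) = δ i • b i := by
    rw [← Module.End.mem_eigenspace_iff, b₀.reindex_apply]
    exact hint.collectedBasis_mem _ _
  have hdiag : LinearMap.toMatrix b b f = diagonal δ := by
    ext i j
    rw [LinearMap.toMatrix_apply, hb, map_smul, b.repr_self, diagonal_apply]
    by_cases h : i = j <;> simp [h]
  let s := Pi.basisFun F n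
  refine ⟨⟨s.toMatrix b, b.toMatrix s, s.toMatrix_mul_toMatrix_flip b,
    b.toMatrix_mul_toMatrix_flip s⟩, δ, ?_⟩
  change M = s.toMatrix b * diagonal δ * b.toMatrix s
  rw [← hdiag, basis_toMatrix_mul_linearMap_toMatrix_mul_basis_toMatrix,
    LinearMap.toMatrix_eq_toMatrix']
  exact (LinearMap.toMatrix'_toLin' M).symm

lemma exists_units_conj_diagonal_of_pow_eq_one {M : Matrix n n F} {N : ℕ}
    (hN : (N : F) ≠ 0) (hM : M ^ N = 1) :
    ∃ (P : (Matrix n n F)ˣ) (δ : n → F), M = P.val * diagonal δ * P⁻¹.val :=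
  exists_units_conj_diagonal <| Module.End.isSemisimple_of_pow_eq_one hN <| by
    rw [← map_pow (toLinAlgEquiv' (R := F) (n := n)), hM, map_one]

end Field

end Matrix

namespace MvPolynomial

section LinSubst

variable {σ R : Type*} [Fintype σ] [CommRing R]

noncomputable def linSubst (M : Matrix σ σ R) : MvPolynomial σ R →ₐ[R] MvPolynomial σ R :=
  aeval fun i => ∑ j, M i j • X j

@[simp]
lemma linSubst_X (M : Matrix σ σ R) (i : σ) : linSubst M (X i) = ∑ j, M i j • X j :=
  aeval_X _ _

lemma linSubst_mul (M N : Matrix σ σ R) : linSubst (M * N) = (linSubst N).comp (linSubst M) := by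
  ext i : 1
  simp only [AlgHom.comp_apply, linSubst_X, map_sum, map_smul, Matrix.mul_apply,
    Finset.sum_smul, smul_smul, Finset.smul_sum]
  exact Finset.sum_comm

lemma IsHomogeneous.linSubst {p : MvPolynomial σ R} {d : ℕ} (hp : p.IsHomogeneous d)
    (M : Matrix σ σ R) : (linSubst M p).IsHomogeneous d := by
  have hlin (i : σ) : (∑ j, M i j • X j : MvPolynomial σ R).IsHomogeneous 1 :=
    IsHomogeneous.sum _ _ _ fun j _ => by
      simpa only [smul_eq_C_mul] using isHomogeneous_C_mul_X (M i j) j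
  have h := hp.aeval _ hlin
  rwa [one_mul] at h

lemma map_linSubst {S : Type*} [CommRing S] (f : R →+* S) (M : Matrix σ σ R)
    (p : MvPolynomial σ R) : map f (linSubst M p) = linSubst (M.map f) (map f p) := by
  induction p using MvPolynomial.induction_on with
  | C a => simp [linSubst]
  | add p q hp hq => simp [hp, hq]
  | mul_X p i hp => simp [hp, map_sum, smul_eq_C_mul]

noncomputable def linSubstHom (M : Matrix σ σ R) (d : ℕ) :
    Module.End R (homogeneousSubmodule σ R d) :=
  (linSubst M).toLinearMap.restrict fun _ hp => IsHomogeneous.linSubst hp M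

@[simp]
lemma coe_linSubstHom_apply (M : Matrix σ σ R) (d : ℕ) (p : homogeneousSubmodule σ R d) :
    (linSubstHom M d p : MvPolynomial σ R) = linSubst M p := rfl

lemma linSubstHom_mul (M N : Matrix σ σ R) (d : ℕ) :
    linSubstHom (M * N) d = linSubstHom N d * linSubstHom M d := by
  ext p
  simp [linSubst_mul]

variable [DecidableEq σ]

lemma linSubst_one : linSubst (1 : Matrix σ σ R) = AlgHom.id R _ := by
  ext i : 1
  simp [Matrix.one_apply, ite_smul]

lemma linSubstHom_one (d : ℕ) : linSubstHom (1 : Matrix σ σ R) d = 1 := by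
  ext p
  simp [linSubst_one]

lemma linSubst_diagonal_monomial (δ : σ → R) (s : σ →₀ ℕ) :
    linSubst (Matrix.diagonal δ) (monomial s 1) = monomial s (∏ i, δ i ^ s i) := by
  have hX (i : σ) : linSubst (Matrix.diagonal δ) (X i) = C (δ i) * X i := by
    rw [linSubst_X, Finset.sum_eq_single i (fun j _ hj => by simp [Matrix.diagonal_apply_ne' _ hj])
      (by simp), Matrix.diagonal_apply_eq, smul_eq_C_mul]
  have hpow (i : σ) (k : ℕ) : linSubst (Matrix.diagonal δ) (X i ^ k) = C (δ i ^ k) * X i ^ k := by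
    rw [map_pow, hX, mul_pow, map_pow]
  rw [monomial_eq, C_1, one_mul, map_finsuppProd]
  simp only [hpow]
  rw [Finsupp.prod_mul, Finsupp.prod, Finsupp.prod, ← map_prod, monomial_eq, Finsupp.prod]
  congr 2
  exact Finset.prod_subset (Finset.subset_univ _) fun i _ hi => by
    rw [Finsupp.notMem_support_iff.mp hi, pow_zero]

end LinSubst

section GradedTrace

variable {σ R : Type*} [Fintype σ] [DecidableEq σ] [CommRing R]

lemma homogeneousSubmodule_eq_restrictSupport (d : ℕ) :
    homogeneousSubmodule σ R d =
      restrictSupport R ↑((Finset.univ : Finset σ).finsuppAntidiag d) := by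
  rw [homogeneousSubmodule_eq_finsupp_supported]
  congr
  ext s
  simp [Finsupp.degree_eq_sum]

noncomputable def homogeneousBasis (d : ℕ) :
    Module.Basis ((Finset.univ : Finset σ).finsuppAntidiag d) R (homogeneousSubmodule σ R d) :=
  (basisRestrictSupport R _).map
    (LinearEquiv.ofEq _ _ (homogeneousSubmodule_eq_restrictSupport d).symm)

@[simp]
lemma homogeneousBasis_repr (d : ℕ) (p : homogeneousSubmodule σ R d)
    (s : (Finset.univ : Finset σ).finsuppAntidiag d) :
    (homogeneousBasis d).repr p s = coeff s.1 p :=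
  rfl

@[simp]
lemma coe_homogeneousBasis (d : ℕ) (s : (Finset.univ : Finset σ).finsuppAntidiag d) :
    (homogeneousBasis (R := R) d s : MvPolynomial σ R) = monomial s.1 1 := by
  have hs : monomial s.1 (1 : R) ∈ homogeneousSubmodule σ R d :=
    isHomogeneous_monomial _ (by
      simpa [Finsupp.degree_eq_sum] using (Finset.mem_finsuppAntidiag.mp s.2).1)
  suffices homogeneousBasis d s = ⟨monomial s.1 1, hs⟩ by rw [this]
  rw [Module.Basis.apply_eq_iff]
  ext t
  rw [homogeneousBasis_repr, coeff_monomial, Finsupp.single_apply]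
  exact if_congr Subtype.ext_iff.symm rfl rfl

instance (d : ℕ) : Module.Free R (homogeneousSubmodule σ R d) :=
  .of_basis (homogeneousBasis d)

instance (d : ℕ) : Module.Finite R (homogeneousSubmodule σ R d) :=
  .of_basis (homogeneousBasis d)

noncomputable def gradedTrace (M : Matrix σ σ R) (d : ℕ) : R :=
  ∑ s ∈ Finset.univ.finsuppAntidiag d, coeff s (linSubst M (monomial s 1))

lemma trace_linSubstHom (M : Matrix σ σ R) (d : ℕ) :
    LinearMap.trace R _ (linSubstHom M d) = gradedTrace M d := by
  rw [LinearMap.trace_eq_matrix_trace R (homogeneousBasis d), Matrix.trace, gradedTrace]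
  simp only [Matrix.diag_apply, LinearMap.toMatrix_apply, homogeneousBasis_repr,
    coe_linSubstHom_apply, coe_homogeneousBasis]
  exact Finset.sum_coe_sort _ fun s => coeff s (linSubst M (monomial s 1))

lemma gradedTrace_units_conj (P : (Matrix σ σ R)ˣ) (N : Matrix σ σ R) (d : ℕ) :
    gradedTrace (P.val * N * P⁻¹.val) d = gradedTrace N d := by
  rw [← trace_linSubstHom, ← trace_linSubstHom, linSubstHom_mul, linSubstHom_mul,
    LinearMap.trace_mul_comm, mul_assoc, ← linSubstHom_mul, Units.inv_mul, linSubstHom_one,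
    mul_one]

lemma gradedTrace_map {S : Type*} [CommRing S] (f : R →+* S) (M : Matrix σ σ R) (d : ℕ) :
    gradedTrace (M.map f) d = f (gradedTrace M d) := by
  simp only [gradedTrace, map_sum, ← coeff_map, map_linSubst, map_monomial, map_one]

lemma gradedTrace_diagonal (δ : σ → R) (d : ℕ) :
    gradedTrace (Matrix.diagonal δ) d =
      ∑ s ∈ (Finset.univ : Finset σ).finsuppAntidiag d, ∏ i, δ i ^ s i := by
  simp only [gradedTrace, linSubst_diagonal_monomial, coeff_monomial, if_true]

noncomputable def gradedTraceSeries (M : Matrix σ σ R) : PowerSeries R :=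
  PowerSeries.mk (gradedTrace M)

lemma gradedTraceSeries_units_conj (P : (Matrix σ σ R)ˣ) (N : Matrix σ σ R) :
    gradedTraceSeries (P.val * N * P⁻¹.val) = gradedTraceSeries N := by
  ext d
  rw [gradedTraceSeries, gradedTraceSeries, PowerSeries.coeff_mk, PowerSeries.coeff_mk,
    gradedTrace_units_conj]

lemma map_gradedTraceSeries {S : Type*} [CommRing S] (f : R →+* S) (M : Matrix σ σ R) :
    PowerSeries.map f (gradedTraceSeries M) = gradedTraceSeries (M.map f) := by
  ext d
  simp [gradedTraceSeries, gradedTrace_map]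

lemma gradedTraceSeries_diagonal (δ : σ → R) :
    gradedTraceSeries (Matrix.diagonal δ) = ∏ i, PowerSeries.mk (δ i ^ ·) := by
  ext d
  simp [gradedTraceSeries, gradedTrace_diagonal, PowerSeries.coeff_prod]

lemma charpolyRev_mul_gradedTraceSeries_diagonal (δ : σ → R) :
    ((Matrix.diagonal δ).charpolyRev : PowerSeries R) * gradedTraceSeries (Matrix.diagonal δ) =
      1 := by
  rw [Matrix.charpolyRev_diagonal, gradedTraceSeries_diagonal,
    ← Polynomial.coeToPowerSeries.ringHom_apply, map_prod, ← Finset.prod_mul_distrib]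
  refine Finset.prod_eq_one fun i _ => ?_
  simpa [mul_comm Polynomial.X] using PowerSeries.one_sub_C_mul_X_mul_mk_pow (δ i)

end GradedTrace

theorem charpolyRev_mul_gradedTraceSeries_of_pow_eq_one {σ K : Type*} [Fintype σ]
    [DecidableEq σ] [Field K] {M : Matrix σ σ K} {N : ℕ} (hN : (N : K) ≠ 0) (hM : M ^ N = 1) :
    (M.charpolyRev : PowerSeries K) * gradedTraceSeries M = 1 := by
  let φ := algebraMap K (AlgebraicClosure K)
  apply PowerSeries.map_injective φ φ.injective
  have hNφ : (N : AlgebraicClosure K) ≠ 0 := by simpa [φ] using (map_ne_zero φ).mpr hN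
  have hMφ : M.map φ ^ N = 1 := by
    rw [← RingHom.mapMatrix_apply, ← map_pow, hM, map_one]
  obtain ⟨P, δ, hPδ⟩ := Matrix.exists_units_conj_diagonal_of_pow_eq_one hNφ hMφ
  rw [map_mul, map_one, ← Polynomial.polynomial_map_coe, ← Matrix.charpolyRev_map,
    map_gradedTraceSeries, hPδ, Matrix.charpolyRev_units_conj, gradedTraceSeries_units_conj]
  exact charpolyRev_mul_gradedTraceSeries_diagonal δ

section Invariants

variable {σ K G : Type*} [Fintype σ] [DecidableEq σ] [Group G]

/-- `linSubst` is contravariant (`linSubst_mul`), hence the inverse. -/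
noncomputable def homogeneousRep [CommRing K] (ρ : G →* (Matrix σ σ K)ˣ) (d : ℕ) :
    Representation K G (homogeneousSubmodule σ K d) where
  toFun g := linSubstHom (ρ g⁻¹).val d
  map_one' := by simp [linSubstHom_one]
  map_mul' g h := by simp [linSubstHom_mul]

lemma mem_homogeneousRep_invariants [CommRing K] (ρ : G →* (Matrix σ σ K)ˣ) (d : ℕ)
    (p : homogeneousSubmodule σ K d) :
    p ∈ (homogeneousRep ρ d).invariants ↔ ∀ g, linSubst (ρ g).val p = p := by
  rw [Representation.mem_invariants, ← (Equiv.inv G).forall_congr_right]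
  simp [homogeneousRep, Subtype.ext_iff]

theorem card_mul_finrank_invariants_inf_homogeneous [Field K] [Fintype G]
    (ρ : G →* (Matrix σ σ K)ˣ) (hG : (Fintype.card G : K) ≠ 0) (d : ℕ) :
    (Fintype.card G : K) * Module.finrank K ↥((⨅ g, LinearMap.eqLocus
      (linSubst (ρ g).val).toLinearMap LinearMap.id) ⊓ homogeneousSubmodule σ K d) =
      ∑ g, gradedTrace (ρ g).val d := by
  have : Invertible (Nat.card G : K) := invertibleOfNonzero (by rwa [Nat.card_eq_fintype_card])
  have hchar := (homogeneousRep ρ d).card_inv_mul_sum_char_eq_finrank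
  have hinv : (homogeneousRep ρ d).invariants = Submodule.comap (homogeneousSubmodule σ K d).subtype
      ((⨅ g, LinearMap.eqLocus (linSubst (ρ g).val).toLinearMap LinearMap.id) ⊓
        homogeneousSubmodule σ K d) := by
    ext p
    rw [mem_homogeneousRep_invariants]
    simp [Submodule.mem_iInf]
  have hsum : ∑ g, (homogeneousRep ρ d).character g = ∑ g, gradedTrace (ρ g).val d :=
    Fintype.sum_equiv (Equiv.inv G) _ _ fun g => by
      simp [Representation.character, homogeneousRep, trace_linSubstHom]
  rw [hinv, LinearEquiv.finrank_eq (Submodule.comapSubtypeEquivOfLe inf_le_right), hsum,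
    Nat.card_eq_fintype_card] at hchar
  rw [← hchar, mul_inv_cancel_left₀ hG]

end Invariants

end MvPolynomial

open MvPolynomial

/-- Molien's formula: if the finite group `G` acts linearly on `V = Kⁿ` (char `K` = 0)
via `ρ`, and `S = K[V]` is the polynomial ring graded by degree, then
`H(S^G, t) = (1/|G|) Σ_{g∈G} 1/det(id − t·ρ(g))` as formal power series in `t`. -/
theorem molien_formula
    (K : Type) [Field K] [CharZero K]
    (G : Type) [Group G] [Fintype G]
    (n : ℕ) (ρ : G →* (Matrix (Fin n) (Fin n) K)ˣ)
    (act : G → MvPolynomial (Fin n) K →ₐ[K] MvPolynomial (Fin n) K)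
    (hact : ∀ g, act g = aeval (fun i =>
      ∑ j, ((ρ g : Matrix (Fin n) (Fin n) K) i j) • (X j : MvPolynomial (Fin n) K)))
    (Inv : Submodule K (MvPolynomial (Fin n) K))
    (hInv : Inv = ⨅ g : G, LinearMap.eqLocus (act g).toLinearMap LinearMap.id)
    (H : PowerSeries K)
    (hH : H = PowerSeries.mk fun d =>
      ((Module.finrank K ((Inv ⊓ homogeneousSubmodule (Fin n) K d :
        Submodule K (MvPolynomial (Fin n) K)))) : K)) :
    (Fintype.card G : K) • H =
      ∑ g : G, (((((1 : Matrix (Fin n) (Fin n) (Polynomial K)) -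
        (Polynomial.X : Polynomial K) •
          ((ρ g : Matrix (Fin n) (Fin n) K)).map Polynomial.C).det :
            Polynomial K) : PowerSeries K))⁻¹ := by
  obtain rfl : act = fun g => linSubst (ρ g).val := funext hact
  subst hInv hH
  have hG : (Fintype.card G : K) ≠ 0 := Nat.cast_ne_zero.mpr Fintype.card_ne_zero
  have hinv (g : G) :
      ((ρ g).val.charpolyRev : PowerSeries K)⁻¹ = gradedTraceSeries (ρ g).val := by
    refine (PowerSeries.inv_eq_iff_mul_eq_one ?_).mpr ?_
    · simp [Polynomial.coeff_zero_eq_eval_zero]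
    rw [mul_comm]
    refine charpolyRev_mul_gradedTraceSeries_of_pow_eq_one hG ?_
    rw [← Units.val_pow_eq_pow_val, ← map_pow, pow_card_eq_one, map_one, Units.val_one]
  refine (?_ : _ = ∑ g, gradedTraceSeries (ρ g).val).trans
    (Finset.sum_congr rfl fun g _ => (hinv g).symm)
  ext d
  simp [gradedTraceSeries, map_sum, card_mul_finrank_invariants_inf_homogeneous ρ hG d]
end

section
/- Let R = ⊕_{d∈ℕ} R_d be a graded ring finitely generated over the field K = R₀ by homogeneous elements f₁,…,f_s of positive degrees d₁,…,d_s. Then for every finitely generated graded R-module M, the product (1−t^{d₁})⋯(1−t^{d_s})·H(M,t) is a Laurent polynomial with integer coefficients. -/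
/-!
Induct on the generators, working with subquotients `N / L` of `M` by homogeneous submodules
`L ≤ N`, whose Hilbert function is `j ↦ dim N_j - dim L_j`. Multiplication by a generator `g` of
degree `e` gives exact sequences `0 → Z_j → (N / L)_j → (N / L)_{j + e} → C_{j + e} → 0` with
`Z = (N ⊓ g⁻¹ L) / L` and `C = N / (L ⊔ g N)`, both killed by `g`; hence
`(1 - t ^ e) H(N / L) = H(C) - t ^ e H(Z)`. When every generator kills `N / L`, the Noetherian
module `N / L` is spanned over `K` by finitely many elements, so its Hilbert function has finite
support.
-/

open LaurentPolynomial DirectSum Module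

namespace LaurentPolynomial

variable {A : Type*} [Ring A]

/-- The coefficient of `t ^ m` in `P * ∑ j, H j * t ^ j`. -/
noncomputable def mulSeries (P : LaurentPolynomial A) (H : ℤ → A) (m : ℤ) : A :=
  P.coeff.sum fun k c ↦ c * H (m - k)

theorem mulSeries_add (P Q : LaurentPolynomial A) (H : ℤ → A) (m : ℤ) :
    mulSeries (P + Q) H m = mulSeries P H m + mulSeries Q H m :=
  Finsupp.sum_add_index' (fun _ ↦ zero_mul _) fun _ _ _ ↦ add_mul _ _ _

theorem mulSeries_sub (P Q : LaurentPolynomial A) (H : ℤ → A) (m : ℤ) :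
    mulSeries (P - Q) H m = mulSeries P H m - mulSeries Q H m :=
  Finsupp.sum_sub_index fun _ _ _ ↦ sub_mul _ _ _

theorem mulSeries_C_mul_T (a : A) (n : ℤ) (H : ℤ → A) (m : ℤ) :
    mulSeries (C a * T n) H m = a * H (m - n) := by
  rw [← single_eq_C_mul_T, mulSeries, AddMonoidAlgebra.coeff_single]
  exact Finsupp.sum_single_index (zero_mul _)

theorem mulSeries_one (H : ℤ → A) : mulSeries 1 H = H :=
  funext fun m ↦ by simpa using mulSeries_C_mul_T 1 0 H m

theorem mulSeries_mul_T (P : LaurentPolynomial A) (e : ℤ) (H : ℤ → A) (m : ℤ) :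
    mulSeries (P * T e) H m = mulSeries P H (m - e) := by
  induction P using LaurentPolynomial.induction_on' with
  | add P Q hP hQ => rw [add_mul, mulSeries_add, mulSeries_add, hP, hQ]
  | C_mul_T n a => rw [mul_T_assoc, mulSeries_C_mul_T, mulSeries_C_mul_T, sub_sub, add_comm e]

theorem mulSeries_sub_right (P : LaurentPolynomial A) (H G : ℤ → A) (m : ℤ) :
    mulSeries P (fun j ↦ H j - G j) m = mulSeries P H m - mulSeries P G m := by
  rw [mulSeries, mulSeries, mulSeries, ← Finsupp.sum_sub]
  simp only [mul_sub]

theorem mulSeries_comp_sub (P : LaurentPolynomial A) (H : ℤ → A) (e m : ℤ) :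
    mulSeries P (fun j ↦ H (j - e)) m = mulSeries P H (m - e) := by
  simp only [mulSeries, sub_right_comm]

theorem mulSeries_one_sub_T_mul {P : LaurentPolynomial A} {e : ℤ} {H G F : ℤ → A}
    (h : ∀ j, H j - H (j - e) = G j - F (j - e)) (m : ℤ) :
    mulSeries ((1 - T e) * P) H m = mulSeries P G m - mulSeries P F (m - e) := by
  rw [sub_mul, one_mul, T_mul, mulSeries_sub, mulSeries_mul_T, ← mulSeries_comp_sub,
    ← mulSeries_sub_right, funext h, mulSeries_sub_right, mulSeries_comp_sub]

theorem finite_support_mulSeries_one_sub_T_mul {P : LaurentPolynomial A} {e : ℤ}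
    {H G F : ℤ → A} (h : ∀ j, H j - H (j - e) = G j - F (j - e))
    (hG : (Function.support (mulSeries P G)).Finite)
    (hF : (Function.support (mulSeries P F)).Finite) :
    (Function.support (mulSeries ((1 - T e) * P) H)).Finite := by
  have hF' : (Function.support fun m ↦ mulSeries P F (m - e)).Finite :=
    hF.preimage (sub_left_injective.injOn)
  refine (hG.union hF').subset ?_
  simp only [funext (mulSeries_one_sub_T_mul h)]
  exact Function.support_sub _ _

end LaurentPolynomial

namespace Submodule

variable {K V W : Type*} [Field K] [AddCommGroup V] [Module K V] [AddCommGroup W] [Module K W]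

theorem finrank_map_add_finrank_inf_ker_s16 (φ : V →ₗ[K] W) (X : Submodule K V)
    [FiniteDimensional K X] :
    finrank K (X.map φ) + finrank K (X ⊓ LinearMap.ker φ : Submodule K V) = finrank K X := by
  rw [← LinearMap.range_domRestrict, ← map_comap_subtype, finrank_map_subtype_eq,
    ← LinearMap.ker_domRestrict, LinearMap.finrank_range_add_finrank_ker]

theorem finrank_inf_comap_add_finrank_sup_map (φ : V →ₗ[K] W) (X : Submodule K V)
    (B : Submodule K W) [FiniteDimensional K X] [FiniteDimensional K B] :
    finrank K (X ⊓ B.comap φ : Submodule K V) + finrank K (B ⊔ X.map φ : Submodule K W) =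
      finrank K X + finrank K B := by
  have hmap : (X ⊓ B.comap φ).map φ = B ⊓ X.map φ := by
    ext y
    simp only [mem_map, mem_inf, mem_comap]
    constructor
    · rintro ⟨x, ⟨hxX, hxB⟩, rfl⟩
      exact ⟨hxB, x, hxX, rfl⟩
    · rintro ⟨hyB, x, hxX, rfl⟩
      exact ⟨x, ⟨hxX, hyB⟩, rfl⟩
  have hker : X ⊓ B.comap φ ⊓ LinearMap.ker φ = X ⊓ LinearMap.ker φ := by
    rw [inf_assoc, inf_eq_right.mpr (LinearMap.ker_le_comap φ)]
  have hX := finrank_map_add_finrank_inf_ker_s16 φ X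
  have hX' := finrank_map_add_finrank_inf_ker_s16 φ (X ⊓ B.comap φ)
  have hsup := finrank_sup_add_finrank_inf_eq B (X.map φ)
  rw [hmap, hker] at hX'
  omega

end Submodule

section Homogeneous

variable {ι K R M : Type*} [DecidableEq ι] [Semiring K] [Semiring R] [AddCommMonoid M]
  [Module K M] [Module R M] {ℳ : ι → Submodule K M} [Decomposition ℳ]

theorem SetLike.IsHomogeneous.inf {p q : Submodule R M} (hp : SetLike.IsHomogeneous ℳ p)
    (hq : SetLike.IsHomogeneous ℳ q) : SetLike.IsHomogeneous ℳ (p ⊓ q) :=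
  fun j _ hx ↦ ⟨hp j hx.1, hq j hx.2⟩

theorem SetLike.IsHomogeneous.sup {p q : Submodule R M} (hp : SetLike.IsHomogeneous ℳ p)
    (hq : SetLike.IsHomogeneous ℳ q) : SetLike.IsHomogeneous ℳ (p ⊔ q) := by
  intro j x hx
  obtain ⟨y, hy, z, hz, rfl⟩ := Submodule.mem_sup.mp hx
  rw [decompose_add, DirectSum.add_apply, Submodule.coe_add]
  exact Submodule.add_mem_sup (hp j hy) (hq j hz)

variable [AddGroup ι]

theorem decompose_map_add_of_mapsTo {F : Type*} [FunLike F M M] [AddMonoidHomClass F M M]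
    (φ : F) {e : ι} (hφ : ∀ j, ∀ x ∈ ℳ j, φ x ∈ ℳ (j + e)) (x : M) (j : ι) :
    (decompose ℳ (φ x) (j + e) : M) = φ (decompose ℳ x j) := by
  induction x using Decomposition.inductionOn ℳ with
  | zero => simp
  | @homogeneous i x =>
    rw [decompose_coe]
    by_cases hij : i = j
    · subst hij
      rw [decompose_of_mem_same ℳ (hφ i x x.2), of_eq_same]
    · rw [decompose_of_mem_ne ℳ (hφ i x x.2) (by simpa using hij),
        of_eq_of_ne _ _ _ (Ne.symm hij), ZeroMemClass.coe_zero, map_zero]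
  | add x y hx hy => simp [hx, hy]

theorem SetLike.IsHomogeneous.comap {p : Submodule R M} (hp : SetLike.IsHomogeneous ℳ p)
    {φ : M →ₗ[R] M} {e : ι} (hφ : ∀ j, ∀ x ∈ ℳ j, φ x ∈ ℳ (j + e)) :
    SetLike.IsHomogeneous ℳ (p.comap φ) := fun j x hx ↦ by
  simpa only [Submodule.mem_comap, decompose_map_add_of_mapsTo φ hφ] using hp (j + e) hx

theorem SetLike.IsHomogeneous.map {p : Submodule R M} (hp : SetLike.IsHomogeneous ℳ p)
    {φ : M →ₗ[R] M} {e : ι} (hφ : ∀ j, ∀ x ∈ ℳ j, φ x ∈ ℳ (j + e)) :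
    SetLike.IsHomogeneous ℳ (p.map φ) := by
  rintro j _ ⟨x, hx, rfl⟩
  rw [← sub_add_cancel j e, decompose_map_add_of_mapsTo φ hφ]
  exact Submodule.mem_map_of_mem (hp _ hx)

end Homogeneous

section Spanning

variable {K R M : Type*} [CommSemiring K] [Ring R] [Algebra K R]
  [AddCommGroup M] [Module K M] [Module R M] [IsScalarTower K R M]

theorem exists_forall_smul_sub_smul_mem {s : Set R} (hgen : Algebra.adjoin K s = ⊤)
    {N L : Submodule R M} (hs : ∀ g ∈ s, ∀ x ∈ N, g • x ∈ L) (r : R) :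
    ∃ c : K, ∀ x ∈ N, r • x - c • x ∈ L := by
  have hr : r ∈ Algebra.adjoin K s := hgen ▸ Algebra.mem_top
  induction hr using Algebra.adjoin_induction with
  | mem g hg => exact ⟨0, fun x hx ↦ by simpa using hs g hg x hx⟩
  | algebraMap c => exact ⟨c, fun x _ ↦ by simp [algebraMap_smul]⟩
  | add r₁ r₂ _ _ h₁ h₂ =>
    obtain ⟨c₁, h₁⟩ := h₁
    obtain ⟨c₂, h₂⟩ := h₂
    refine ⟨c₁ + c₂, fun x hx ↦ ?_⟩
    convert L.add_mem (h₁ x hx) (h₂ x hx) using 1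
    simp only [add_smul]; abel
  | mul r₁ r₂ _ _ h₁ h₂ =>
    obtain ⟨c₁, h₁⟩ := h₁
    obtain ⟨c₂, h₂⟩ := h₂
    refine ⟨c₁ * c₂, fun x hx ↦ ?_⟩
    -- r₁ r₂ x - c₁ c₂ x = r₁ (r₂ x - c₂ x) + c₂ (r₁ x - c₁ x)
    convert L.add_mem (L.smul_mem r₁ (h₂ x hx)) (L.smul_of_tower_mem c₂ (h₁ x hx)) using 1
    simp only [mul_smul, smul_sub, smul_comm r₁ c₂, smul_comm c₁ c₂]; abel

theorem span_restrictScalars_le_sup_span {s : Set R} (hgen : Algebra.adjoin K s = ⊤)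
    {T : Set M} {L : Submodule R M} (hs : ∀ g ∈ s, ∀ x ∈ Submodule.span R T, g • x ∈ L) :
    (Submodule.span R T).restrictScalars K ≤ L.restrictScalars K ⊔ Submodule.span K T := by
  intro x hx
  induction hx using Submodule.span_induction with
  | mem t ht => exact Submodule.mem_sup_right (Submodule.subset_span ht)
  | zero => exact zero_mem _
  | add x y _ _ hx hy => exact add_mem hx hy
  | smul r x hxT hx =>
    obtain ⟨c, hc⟩ := exists_forall_smul_sub_smul_mem hgen hs r
    rw [← sub_add_cancel (r • x) (c • x)]
    exact add_mem (Submodule.mem_sup_left (hc x hxT)) (Submodule.smul_mem _ c hx)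

theorem decompose_apply_eq_zero_of_mem_span {ι : Type*} [DecidableEq ι] {ℳ : ι → Submodule K M}
    [Decomposition ℳ] {T : Set M} {j : ι}
    (hT : ∀ t ∈ T, decompose ℳ t j = 0) {y : M} (hy : y ∈ Submodule.span K T) :
    decompose ℳ y j = 0 := by
  induction hy using Submodule.span_induction with
  | mem t ht => exact hT t ht
  | zero => simp
  | add x y _ _ hx hy => simp [hx, hy]
  | smul c x _ hx => rw [decompose_smul, DirectSum.smul_apply, hx, smul_zero]

end Spanning

section HilbertFunction

variable {K R M : Type*} [Field K] [CommRing R] [Algebra K R]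
  [AddCommGroup M] [Module K M] [Module R M] [IsScalarTower K R M]
  (ℳ : ℤ → Submodule K M)

def gradedPart (p : Submodule R M) (j : ℤ) : Submodule K M :=
  p.restrictScalars K ⊓ ℳ j

instance [∀ j, FiniteDimensional K (ℳ j)] (p : Submodule R M) (j : ℤ) :
    FiniteDimensional K (gradedPart ℳ p j) :=
  Submodule.finiteDimensional_of_le inf_le_right

noncomputable def hilbertFn (N L : Submodule R M) (j : ℤ) : ℤ :=
  finrank K (gradedPart ℳ N j) - finrank K (gradedPart ℳ L j)

variable {ℳ}

theorem gradedPart_inf_comap {φ : M →ₗ[R] M} {e : ℤ} (hφ : ∀ j, ∀ x ∈ ℳ j, φ x ∈ ℳ (j + e))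
    (N L : Submodule R M) (j : ℤ) :
    gradedPart ℳ (N ⊓ L.comap φ) j =
      gradedPart ℳ N j ⊓ (gradedPart ℳ L (j + e)).comap (φ.restrictScalars K) := by
  ext x
  simp only [gradedPart, Submodule.mem_inf, Submodule.restrictScalars_mem, Submodule.mem_comap,
    LinearMap.coe_restrictScalars]
  exact ⟨fun ⟨⟨hN, hL⟩, hj⟩ ↦ ⟨⟨hN, hj⟩, hL, hφ j x hj⟩, fun ⟨⟨hN, hj⟩, hL, _⟩ ↦ ⟨⟨hN, hL⟩, hj⟩⟩

variable [Decomposition ℳ]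

theorem gradedPart_sup_map {φ : M →ₗ[R] M} {e : ℤ} (hφ : ∀ j, ∀ x ∈ ℳ j, φ x ∈ ℳ (j + e))
    {N L : Submodule R M} (hN : SetLike.IsHomogeneous ℳ N) (hL : SetLike.IsHomogeneous ℳ L)
    (j : ℤ) :
    gradedPart ℳ (L ⊔ N.map φ) (j + e) =
      gradedPart ℳ L (j + e) ⊔ (gradedPart ℳ N j).map (φ.restrictScalars K) := by
  refine le_antisymm (fun y hy ↦ ?_) (sup_le ?_ ?_)
  · obtain ⟨hy, hyj⟩ := Submodule.mem_inf.mp hy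
    obtain ⟨l, hl, _, ⟨x, hx, rfl⟩, rfl⟩ := Submodule.mem_sup.mp hy
    rw [← decompose_of_mem_same ℳ hyj, decompose_add, DirectSum.add_apply, Submodule.coe_add,
      decompose_map_add_of_mapsTo φ hφ]
    exact Submodule.add_mem_sup (Submodule.mem_inf.mpr ⟨hL _ hl, SetLike.coe_mem _⟩)
      (Submodule.mem_map_of_mem (Submodule.mem_inf.mpr ⟨hN _ hx, SetLike.coe_mem _⟩))
  · exact inf_le_inf_right _ (Submodule.restrictScalars_mono K le_sup_left)
  · rintro _ ⟨x, hx, rfl⟩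
    obtain ⟨hxN, hxj⟩ := Submodule.mem_inf.mp hx
    exact Submodule.mem_inf.mpr
      ⟨Submodule.mem_sup_right (Submodule.mem_map_of_mem hxN), hφ j x hxj⟩

theorem finite_support_hilbertFn_of_smul_mem [IsNoetherian R M] {s : Set R}
    (hgen : Algebra.adjoin K s = ⊤) {N L : Submodule R M} (hL : SetLike.IsHomogeneous ℳ L)
    (hLN : L ≤ N) (hs : ∀ g ∈ s, ∀ x ∈ N, g • x ∈ L) :
    (Function.support (hilbertFn ℳ N L)).Finite := by
  obtain ⟨T, rfl⟩ := IsNoetherian.noetherian N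
  refine (T.finite_toSet.biUnion fun t _ ↦ (DFinsupp.finite_support (decompose ℳ t))).subset ?_
  intro j hj
  by_contra hjT
  simp only [Set.mem_iUnion, Set.mem_ofPred_eq, not_exists, not_not] at hjT
  suffices gradedPart ℳ (Submodule.span R T) j = gradedPart ℳ L j by
    exact hj (by rw [hilbertFn, this, sub_self])
  refine le_antisymm (fun x hx ↦ ?_) (inf_le_inf_right _ (Submodule.restrictScalars_mono K hLN))
  obtain ⟨hxT, hxj⟩ := Submodule.mem_inf.mp hx
  obtain ⟨l, hl, y, hy, rfl⟩ :=
    Submodule.mem_sup.mp (span_restrictScalars_le_sup_span hgen hs hxT)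
  rw [← decompose_of_mem_same ℳ hxj, decompose_add, DirectSum.add_apply,
    decompose_apply_eq_zero_of_mem_span hjT hy, add_zero]
  exact Submodule.mem_inf.mpr ⟨hL j hl, SetLike.coe_mem _⟩

variable [∀ j, FiniteDimensional K (ℳ j)]

theorem hilbertFn_sub_hilbertFn_sub_eq {φ : M →ₗ[R] M} {e : ℤ}
    (hφ : ∀ j, ∀ x ∈ ℳ j, φ x ∈ ℳ (j + e)) {N L : Submodule R M}
    (hN : SetLike.IsHomogeneous ℳ N) (hL : SetLike.IsHomogeneous ℳ L) (j : ℤ) :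
    hilbertFn ℳ N L j - hilbertFn ℳ N L (j - e) =
      hilbertFn ℳ N (L ⊔ N.map φ) j - hilbertFn ℳ (N ⊓ L.comap φ) L (j - e) := by
  have key := Submodule.finrank_inf_comap_add_finrank_sup_map (φ.restrictScalars K)
    (gradedPart ℳ N (j - e)) (gradedPart ℳ L (j - e + e))
  rw [← gradedPart_inf_comap hφ, ← gradedPart_sup_map hφ hN hL, sub_add_cancel] at key
  simp only [hilbertFn]
  omega

end HilbertFunction

section Induction

variable {K R M ι : Type*} [Field K] [CommRing R] [Algebra K R]
  [AddCommGroup M] [Module K M] [Module R M] [IsScalarTower K R M] [IsNoetherian R M]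
  {ℳ : ℤ → Submodule K M} [Decomposition ℳ] [∀ j, FiniteDimensional K (ℳ j)] [DecidableEq ι]

theorem finite_support_mulSeries_prod_hilbertFn {f : ι → R} {d : ι → ℤ}
    (hf : ∀ i j, ∀ x ∈ ℳ j, f i • x ∈ ℳ (j + d i)) (hgen : Algebra.adjoin K (Set.range f) = ⊤)
    (σ : Finset ι) {N L : Submodule R M} (hN : SetLike.IsHomogeneous ℳ N)
    (hL : SetLike.IsHomogeneous ℳ L) (hLN : L ≤ N) (hσ : ∀ i ∉ σ, ∀ x ∈ N, f i • x ∈ L) :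
    (Function.support (mulSeries (∏ i ∈ σ, (1 - T (d i))) (hilbertFn ℳ N L))).Finite := by
  induction σ using Finset.induction_on generalizing N L with
  | empty =>
    rw [Finset.prod_empty, mulSeries_one]
    exact finite_support_hilbertFn_of_smul_mem hgen hL hLN
      (by rintro _ ⟨i, rfl⟩; exact hσ i (Finset.notMem_empty i))
  | @insert i σ hi ih =>
    let φ := LinearMap.lsmul R M (f i)
    have hφ : ∀ j, ∀ x ∈ ℳ j, φ x ∈ ℳ (j + d i) := hf i
    have hσ' : ∀ i' ∉ σ, i' ≠ i → ∀ x ∈ N, f i' • x ∈ L := fun i' hi' hne ↦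
      hσ i' (by simp [hi', hne])
    rw [Finset.prod_insert hi]
    refine finite_support_mulSeries_one_sub_T_mul (hilbertFn_sub_hilbertFn_sub_eq hφ hN hL)
      (ih hN (SetLike.IsHomogeneous.sup hL (SetLike.IsHomogeneous.map hN hφ)) (sup_le hLN ?_)
        fun i' hi' x hx ↦ ?_)
      (ih (SetLike.IsHomogeneous.inf hN (SetLike.IsHomogeneous.comap hL hφ)) hL (le_inf hLN ?_)
        fun i' hi' x hx ↦ ?_)
    · rintro _ ⟨x, hx, rfl⟩
      exact N.smul_mem (f i) hx
    · by_cases hii : i' = i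
      · exact Submodule.mem_sup_right (hii ▸ Submodule.mem_map_of_mem hx)
      · exact Submodule.mem_sup_left (hσ' i' hi' hii x hx)
    · exact fun x hx ↦ L.smul_mem (f i) hx
    · by_cases hii : i' = i
      · exact hii ▸ hx.2
      · exact hσ' i' hi' hii x hx.1

end Induction

theorem denominator_of_fg_module_divides_generators_general
    (K : Type) [Field K] (R : Type) [CommRing R] [Algebra K R]
    (𝒜 : ℕ → Submodule K R)
    (s : ℕ) (f : Fin s → R) (d : Fin s → ℕ)
    (hf : ∀ i, f i ∈ 𝒜 (d i))
    (hgen : Algebra.adjoin K (Set.range f) = ⊤)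
    (M : Type) [AddCommGroup M] [Module K M] [Module R M] [IsScalarTower K R M]
    [Module.Finite R M]
    (ℳ : ℤ → Submodule K M) (hdec : DirectSum.IsInternal ℳ)
    (hsm : ∀ (i : ℕ) (r : R), r ∈ 𝒜 i → ∀ (j : ℤ) (x : M), x ∈ ℳ j → r • x ∈ ℳ (j + i))
    (hfin : ∀ j, FiniteDimensional K (ℳ j))
    (H : ℤ → ℤ) (hH : ∀ j, H j = Module.finrank K (ℳ j))
    (P : LaurentPolynomial ℤ) (hP : P = ∏ i, (1 - LaurentPolynomial.T (d i))) :
    ∃ A : LaurentPolynomial ℤ, ∀ m : ℤ, (P.coeff.sum fun k c => c * H (m - k)) = A.coeff m := by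
  have : Algebra.FiniteType K R := ⟨⟨(Set.finite_range f).toFinset, by simpa using hgen⟩⟩
  have : IsNoetherianRing R := Algebra.FiniteType.isNoetherianRing K R
  let := hdec.chooseDecomposition
  have hH' : H = hilbertFn ℳ (⊤ : Submodule R M) ⊥ := funext fun j ↦ by
    rw [hH, hilbertFn, gradedPart, gradedPart, Submodule.restrictScalars_top,
      Submodule.restrictScalars_bot, top_inf_eq, bot_inf_eq, finrank_bot, Nat.cast_zero, sub_zero]
  have hfinite := finite_support_mulSeries_prod_hilbertFn (ℳ := ℳ) (d := fun i ↦ (d i : ℤ))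
    (fun i ↦ hsm (d i) (f i) (hf i)) hgen Finset.univ (fun _ _ _ ↦ Submodule.mem_top)
    (fun _ _ hx ↦ by simp [(Submodule.mem_bot R).mp hx]) bot_le
    (fun i hi ↦ absurd (Finset.mem_univ i) hi)
  rw [← hH', ← hP] at hfinite
  exact ⟨AddMonoidAlgebra.ofCoeff (Finsupp.ofSupportFinite _ hfinite), fun m ↦ rfl⟩

/-- Let `R = ⊕_{d∈ℕ} R_d` be a graded ring with `R₀ = K` a field, generated over `K`
by homogeneous elements `f₁,…,f_s` of positive degrees `d₁,…,d_s`. Then for every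
finitely generated graded `R`-module `M`, the product
`(1−t^{d₁})⋯(1−t^{d_s})·H(M,t)` is a Laurent polynomial with integer coefficients
(stated coefficientwise). -/
theorem denominator_of_fg_module_divides_generators
    (K : Type) [Field K] (R : Type) [CommRing R] [Algebra K R]
    (𝒜 : ℕ → Submodule K R) [GradedAlgebra 𝒜]
    (h0 : 𝒜 0 = Submodule.span K {1})
    (s : ℕ) (f : Fin s → R) (d : Fin s → ℕ) (hd : ∀ i, 1 ≤ d i)
    (hf : ∀ i, f i ∈ 𝒜 (d i))
    (hgen : Algebra.adjoin K (Set.range f) = ⊤)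
    (M : Type) [AddCommGroup M] [Module K M] [Module R M] [IsScalarTower K R M]
    [Module.Finite R M]
    (ℳ : ℤ → Submodule K M) (hdec : DirectSum.IsInternal ℳ)
    (hsm : ∀ (i : ℕ) (r : R), r ∈ 𝒜 i → ∀ (j : ℤ) (x : M), x ∈ ℳ j → r • x ∈ ℳ (j + i))
    (hfin : ∀ j, FiniteDimensional K (ℳ j))
    (H : ℤ → ℤ) (hH : ∀ j, H j = Module.finrank K (ℳ j))
    (P : LaurentPolynomial ℤ) (hP : P = ∏ i, (1 - LaurentPolynomial.T (d i))) :
    ∃ A : LaurentPolynomial ℤ, ∀ m : ℤ, (P.coeff.sum fun k c => c * H (m - k)) = A.coeff m :=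
  denominator_of_fg_module_divides_generators_general K R 𝒜 s f d hf hgen M ℳ hdec hsm hfin H hH P
    hP
end
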